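/- arXiv:math/0411518 — 5 statements merged into one kernel-verified Lean document; each statement's English description precedes it below -/
import Mathlib

section
/- Let r > 1. Then ∫₀¹ ∫₀^{arccos((1-x)/r)} (1-x)/cos θ dθ dx + ∫₀¹ ∫_{π - arccos(x/r)}^{π} ( -x/cos θ ) dθ dx = ln( √(r²-1) + r ) + r( r - √(r²-1) ). -/
open Real intervalIntegral

lemma hasDerivF (θ : ℝ) (hc : Real.cos θ ≠ 0) :
    HasDerivAt (fun t => Real.log ((1 + Real.sin t) / Real.cos t)) (1 / Real.cos θ) θ := by
  have hs : 1 + Real.sin θ ≠ 0 := by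
    intro h
    have h1 : Real.sin θ = -1 := by linarith
    have hpy := Real.sin_sq_add_cos_sq θ
    have : Real.cos θ = 0 := by nlinarith
    exact hc this
  have h1 : HasDerivAt (fun t => (1 + Real.sin t) / Real.cos t)
      ((1 + Real.sin θ) / Real.cos θ ^ 2) θ := by
    have := ((hasDerivAt_const θ (1:ℝ)).add (Real.hasDerivAt_sin θ)).div
      (Real.hasDerivAt_cos θ) hc
    refine this.congr_deriv ?_
    have hpy := Real.sin_sq_add_cos_sq θ
    simp only [Pi.add_apply]
    field_simp
    nlinarith [hpy]
  have h2 := h1.log (div_ne_zero hs hc)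
  convert h2 using 1
  field_simp

lemma key_log (r y : ℝ) (hr : 1 < r) (hy0 : 0 < y) (hy1 : y ≤ 1) :
    Real.log ((1 + Real.sqrt (1 - (y / r) ^ 2)) / (y / r)) =
      Real.log (r + Real.sqrt (r ^ 2 - y ^ 2)) - Real.log y := by
  have hr0 : (0:ℝ) < r := by linarith
  have hsq : Real.sqrt (1 - (y / r) ^ 2) = Real.sqrt (r ^ 2 - y ^ 2) / r := by
    have h : 1 - (y / r) ^ 2 = (r ^ 2 - y ^ 2) / r ^ 2 := by field_simp
    rw [h, Real.sqrt_div (by nlinarith), Real.sqrt_sq hr0.le]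
  rw [hsq]
  have hb : (0:ℝ) ≤ Real.sqrt (r ^ 2 - y ^ 2) := Real.sqrt_nonneg _
  have h1 : (1 + Real.sqrt (r ^ 2 - y ^ 2) / r) / (y / r)
      = (r + Real.sqrt (r ^ 2 - y ^ 2)) / y := by
    field_simp
  rw [h1, Real.log_div (by positivity) hy0.ne']

lemma inner_eval (r y : ℝ) (hr : 1 < r) (hy0 : 0 < y) (hy1 : y ≤ 1) :
    (∫ θ in (0:ℝ)..Real.arccos (y / r), y / Real.cos θ) =
      y * Real.log (r + Real.sqrt (r ^ 2 - y ^ 2)) - y * Real.log y := by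
  have hr0 : (0:ℝ) < r := by linarith
  have ha0 : 0 < y / r := by positivity
  have ha1 : y / r < 1 := by rw [div_lt_one hr0]; linarith
  set T := Real.arccos (y / r) with hT
  have hT2 : T < Real.pi / 2 := by
    rw [hT]
    rw [Real.arccos_lt_pi_div_two]
    exact ha0
  have hT0 : 0 ≤ T := Real.arccos_nonneg _
  have hcos : ∀ θ ∈ Set.uIcc (0:ℝ) T, 0 < Real.cos θ := by
    intro θ hθ
    rw [Set.uIcc_of_le hT0] at hθ
    apply Real.cos_pos_of_mem_Ioo
    constructor
    · have := Real.pi_pos; linarith [hθ.1]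
    · linarith [hθ.2]
  have hFTC := intervalIntegral.integral_eq_sub_of_hasDerivAt
    (f := fun t => y * Real.log ((1 + Real.sin t) / Real.cos t))
    (f' := fun θ => y / Real.cos θ)
    (fun θ hθ => by
      have := (hasDerivF θ (hcos θ hθ).ne').const_mul y
      simpa [mul_one_div, div_eq_mul_inv] using this)
    (by
      apply ContinuousOn.intervalIntegrable
      exact continuousOn_const.div (Real.continuous_cos.continuousOn)
        (fun θ hθ => (hcos θ hθ).ne'))
  rw [hFTC]
  have hmem : y / r ∈ Set.Icc (-1:ℝ) 1 := ⟨by linarith, le_of_lt ha1⟩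
  have hcT : Real.cos T = y / r := Real.cos_arccos hmem.1 hmem.2
  have hsT : Real.sin T = Real.sqrt (1 - (y / r) ^ 2) := Real.sin_arccos _
  rw [hcT, hsT, Real.sin_zero, Real.cos_zero]
  rw [key_log r y hr hy0 hy1]
  simp [mul_sub]

lemma inner_eval2 (r y : ℝ) (hr : 1 < r) (hy0 : 0 < y) (hy1 : y ≤ 1) :
    (∫ θ in (Real.pi - Real.arccos (y / r))..Real.pi, (-y / Real.cos θ)) =
      y * Real.log (r + Real.sqrt (r ^ 2 - y ^ 2)) - y * Real.log y := by
  have hr0 : (0:ℝ) < r := by linarith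
  have ha0 : 0 < y / r := by positivity
  have ha1 : y / r < 1 := by rw [div_lt_one hr0]; linarith
  set T := Real.arccos (y / r) with hT
  have hT2 : T < Real.pi / 2 := by rw [hT, Real.arccos_lt_pi_div_two]; exact ha0
  have hT0 : 0 ≤ T := Real.arccos_nonneg _
  have hpi := Real.pi_pos
  have hle : Real.pi - T ≤ Real.pi := by linarith
  have hcos : ∀ θ ∈ Set.uIcc (Real.pi - T) Real.pi, Real.cos θ < 0 := by
    intro θ hθ
    rw [Set.uIcc_of_le hle] at hθ
    apply Real.cos_neg_of_pi_div_two_lt_of_lt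
    · linarith [hθ.1]
    · linarith [hθ.2]
  have hFTC := intervalIntegral.integral_eq_sub_of_hasDerivAt
    (a := Real.pi - T) (b := Real.pi)
    (f := fun t => (-y) * Real.log ((1 + Real.sin t) / Real.cos t))
    (f' := fun θ => -y / Real.cos θ)
    (fun θ hθ => by
      have := (hasDerivF θ (hcos θ hθ).ne).const_mul (-y)
      simpa [mul_one_div, neg_div, neg_mul, div_eq_mul_inv] using this)
    (by
      apply ContinuousOn.intervalIntegrable
      exact continuousOn_const.div (Real.continuous_cos.continuousOn)
        (fun θ hθ => (hcos θ hθ).ne))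
  rw [hFTC]
  have hmem : y / r ∈ Set.Icc (-1:ℝ) 1 := ⟨by linarith, le_of_lt ha1⟩
  have hcT : Real.cos T = y / r := Real.cos_arccos hmem.1 hmem.2
  have hsT : Real.sin T = Real.sqrt (1 - (y / r) ^ 2) := Real.sin_arccos _
  rw [Real.sin_pi, Real.cos_pi, Real.cos_pi_sub, Real.sin_pi_sub, hcT, hsT]
  have h1 : ((1:ℝ) + 0) / (-1) = -1 := by norm_num
  rw [h1]
  have h2 : Real.log (-1 : ℝ) = 0 := by
    rw [Real.log_neg_eq_log, Real.log_one]
  rw [h2]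
  have h3 : (1 + Real.sqrt (1 - (y / r) ^ 2)) / -(y / r)
      = -((1 + Real.sqrt (1 - (y / r) ^ 2)) / (y / r)) := by ring
  rw [h3, Real.log_neg_eq_log, key_log r y hr hy0 hy1]
  ring

lemma integral_x_log_x : (∫ x in (0:ℝ)..1, x * Real.log x) = -(1/4) := by
  have h := intervalIntegral.integral_eq_sub_of_hasDerivAt_of_le
    (f := fun x => x * Real.log x * (x / 2) - x ^ 2 / 4)
    (f' := fun x => x * Real.log x)
    (by norm_num)
    (by
      apply ContinuousOn.sub
      · exact ((Real.continuous_mul_log.mul (continuous_id.div_const 2)).continuousOn)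
      · exact (continuous_pow 2 |>.div_const 4).continuousOn)
    (fun x hx => by
      have hx0 : x ≠ 0 := ne_of_gt hx.1
      have h1 : HasDerivAt (fun x : ℝ => x * Real.log x) (Real.log x + 1) x :=
        Real.hasDerivAt_mul_log hx0
      have h2 : HasDerivAt (fun x : ℝ => x / 2) (1 / 2) x := (hasDerivAt_id x).div_const 2
      have h3 : HasDerivAt (fun x : ℝ => x ^ 2 / 4) (2 * x ^ 1 / 4) x :=
        (hasDerivAt_pow 2 x).div_const 4
      have := (h1.mul h2).sub h3
      refine this.congr_deriv ?_
      field_simp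
      ring)
    (Real.continuous_mul_log.intervalIntegrable 0 1)
  rw [h]
  norm_num

lemma cont_J (r : ℝ) (hr : 1 < r) :
    Continuous (fun x : ℝ => x * Real.log (r + Real.sqrt (r ^ 2 - x ^ 2))) := by
  apply continuous_id.mul
  apply Continuous.log
  · exact continuous_const.add (Real.continuous_sqrt.comp
      (continuous_const.sub (continuous_pow 2)))
  · intro x
    have : 0 ≤ Real.sqrt (r ^ 2 - x ^ 2) := Real.sqrt_nonneg _
    have hr0 : (0:ℝ) < r := by linarith
    positivity

lemma integral_J (r : ℝ) (hr : 1 < r) :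
    (∫ x in (0:ℝ)..1, x * Real.log (r + Real.sqrt (r ^ 2 - x ^ 2))) =
      Real.log (r + Real.sqrt (r ^ 2 - 1)) / 2 + r ^ 2 / 2 - 1/4
        - r * Real.sqrt (r ^ 2 - 1) / 2 := by
  have hr0 : (0:ℝ) < r := by linarith
  set G : ℝ → ℝ := fun x => x ^ 2 / 2 * Real.log (r + Real.sqrt (r ^ 2 - x ^ 2))
      + (r ^ 2 - x ^ 2) / 4 - r / 2 * Real.sqrt (r ^ 2 - x ^ 2) with hG
  have hderiv : ∀ x ∈ Set.uIcc (0:ℝ) 1,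
      HasDerivAt G (x * Real.log (r + Real.sqrt (r ^ 2 - x ^ 2))) x := by
    intro x hx
    rw [Set.uIcc_of_le (by norm_num)] at hx
    have hxpos : 0 < r ^ 2 - x ^ 2 := by nlinarith [hx.1, hx.2]
    set s := Real.sqrt (r ^ 2 - x ^ 2) with hs
    have hs0 : 0 < s := Real.sqrt_pos.mpr hxpos
    have hs2 : s ^ 2 = r ^ 2 - x ^ 2 := Real.sq_sqrt hxpos.le
    have hrs : 0 < r + s := by linarith
    have hinner : HasDerivAt (fun x : ℝ => r ^ 2 - x ^ 2) (-(2 * x)) x := by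
      have := ((hasDerivAt_pow 2 x).const_sub (r ^ 2))
      simpa using this
    have hsqrt : HasDerivAt (fun x : ℝ => Real.sqrt (r ^ 2 - x ^ 2))
        (1 / (2 * s) * (-(2 * x))) x := by
      have := (Real.hasDerivAt_sqrt hxpos.ne').comp x hinner
      simpa [hs, Function.comp_def] using this
    have hlog : HasDerivAt (fun x : ℝ => Real.log (r + Real.sqrt (r ^ 2 - x ^ 2)))
        ((1 / (2 * s) * (-(2 * x))) / (r + s)) x := by
      exact (hsqrt.const_add r).log hrs.ne'
    have hsq2 : HasDerivAt (fun x : ℝ => x ^ 2 / 2) x x := by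
      have := (hasDerivAt_pow 2 x).div_const 2
      simpa using this
    have h2 : HasDerivAt (fun x : ℝ => (r ^ 2 - x ^ 2) / 4) (-(2 * x) / 4) x :=
      hinner.div_const 4
    have h3 : HasDerivAt (fun x : ℝ => r / 2 * Real.sqrt (r ^ 2 - x ^ 2))
        (r / 2 * (1 / (2 * s) * (-(2 * x)))) x := hsqrt.const_mul (r / 2)
    have := ((hsq2.mul hlog).add h2).sub h3
    refine this.congr_deriv ?_
    field_simp
    ring_nf
    have hs' : Real.sqrt (-x ^ 2 + r ^ 2) = s := by rw [hs]; ring_nf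
    rw [hs']
    linear_combination (-4 * x) * hs2
  have hcont : IntervalIntegrable
      (fun x => x * Real.log (r + Real.sqrt (r ^ 2 - x ^ 2))) MeasureTheory.volume 0 1 :=
    (cont_J r hr).intervalIntegrable 0 1
  have h := intervalIntegral.integral_eq_sub_of_hasDerivAt hderiv hcont
  rw [h, hG]
  simp only []
  have h1 : Real.sqrt (r ^ 2 - 0 ^ 2) = r := by
    rw [← Real.sqrt_sq hr0.le]; norm_num
  rw [h1]
  norm_num
  ring

theorem stmt_7 (r : ℝ) (hr : 1 < r) :
    (∫ x in (0:ℝ)..1, ∫ θ in (0:ℝ)..Real.arccos ((1 - x) / r), (1 - x) / Real.cos θ) +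
    (∫ x in (0:ℝ)..1, ∫ θ in (Real.pi - Real.arccos (x / r))..Real.pi,
        (-x / Real.cos θ)) =
    Real.log (Real.sqrt (r ^ 2 - 1) + r) + r * (r - Real.sqrt (r ^ 2 - 1)) := by
  have hr0 : (0:ℝ) < r := by linarith
  set g : ℝ → ℝ := fun x => x * Real.log (r + Real.sqrt (r ^ 2 - x ^ 2)) - x * Real.log x
    with hg
  -- first double integral
  have h1 : (∫ x in (0:ℝ)..1, ∫ θ in (0:ℝ)..Real.arccos ((1 - x) / r), (1 - x) / Real.cos θ)
      = ∫ x in (0:ℝ)..1, ∫ θ in (0:ℝ)..Real.arccos (x / r), x / Real.cos θ := by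
    have := intervalIntegral.integral_comp_sub_left
      (fun y => ∫ θ in (0:ℝ)..Real.arccos (y / r), y / Real.cos θ) 1 (a := (0:ℝ)) (b := 1)
    simpa using this
  have h2 : (∫ x in (0:ℝ)..1, ∫ θ in (0:ℝ)..Real.arccos (x / r), x / Real.cos θ)
      = ∫ x in (0:ℝ)..1, g x := by
    apply intervalIntegral.integral_congr
    intro x hx
    rw [Set.uIcc_of_le (by norm_num : (0:ℝ) ≤ 1)] at hx
    rcases eq_or_lt_of_le hx.1 with h | h
    · simp [hg, ← h]
    · rw [hg]; exact inner_eval r x hr h hx.2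
  have h3 : (∫ x in (0:ℝ)..1, ∫ θ in (Real.pi - Real.arccos (x / r))..Real.pi,
        (-x / Real.cos θ)) = ∫ x in (0:ℝ)..1, g x := by
    apply intervalIntegral.integral_congr
    intro x hx
    rw [Set.uIcc_of_le (by norm_num : (0:ℝ) ≤ 1)] at hx
    rcases eq_or_lt_of_le hx.1 with h | h
    · simp [hg, ← h]
    · rw [hg]; exact inner_eval2 r x hr h hx.2
  rw [h1, h2, h3]
  have h4 : (∫ x in (0:ℝ)..1, g x)
      = (∫ x in (0:ℝ)..1, x * Real.log (r + Real.sqrt (r ^ 2 - x ^ 2)))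
        - ∫ x in (0:ℝ)..1, x * Real.log x := by
    rw [hg]
    exact intervalIntegral.integral_sub ((cont_J r hr).intervalIntegrable 0 1)
      (Real.continuous_mul_log.intervalIntegrable 0 1)
  rw [h4, integral_J r hr, integral_x_log_x, add_comm (Real.sqrt (r ^ 2 - 1)) r]
  ring
end

section
/- Let r > 1, s ≥ 0, 0 < α < π, and 0 < x < 1. Set κ = √(r² + s² - 2rs·cos α), ρ = arcsin(s·sin α/κ), u₁ = r·sin α, v₁ = r(1 + cos α), ξ₁ = α + arccos((1-x)/r), and η₁ = α + ρ + arccos((1-x)/κ). Assume κ > 0, r ≥ s·cos α, 1 - x ≤ κ, ξ₁ ≤ η₁, and cos τ ≠ 0 for all τ ∈ [ξ₁, η₁]. Then ∫_{ξ₁ - α}^{η₁ - α} ( r + (x - 1 + r·cos θ)/cos(θ + α) ) dθ = u₁·ln| cos ξ₁ / cos η₁ | - ((1-x)/2)·ln( (sin ξ₁·(sin η₁ + 1) - sin η₁ - 1)/(sin ξ₁·(sin η₁ - 1) + sin η₁ - 1) ) + v₁·(η₁ - ξ₁). -/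
open Real intervalIntegral

set_option maxHeartbeats 1000000

theorem stmt_8 (r s α x κ ρ u₁ v₁ ξ₁ η₁ : ℝ)
    (hr : 1 < r) (hs : 0 ≤ s) (hα0 : 0 < α) (hαπ : α < Real.pi)
    (hx0 : 0 < x) (hx1 : x < 1)
    (hκ : κ = Real.sqrt (r ^ 2 + s ^ 2 - 2 * r * s * Real.cos α))
    (hρ : ρ = Real.arcsin (s * Real.sin α / κ))
    (hu₁ : u₁ = r * Real.sin α)
    (hv₁ : v₁ = r * (1 + Real.cos α))
    (hξ₁ : ξ₁ = α + Real.arccos ((1 - x) / r))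
    (hη₁ : η₁ = α + ρ + Real.arccos ((1 - x) / κ))
    (hκpos : 0 < κ) (hrs : s * Real.cos α ≤ r) (hxκ : 1 - x ≤ κ)
    (hξη : ξ₁ ≤ η₁)
    (hcos : ∀ τ ∈ Set.Icc ξ₁ η₁, Real.cos τ ≠ 0) :
    (∫ θ in (ξ₁ - α)..(η₁ - α),
        (r + (x - 1 + r * Real.cos θ) / Real.cos (θ + α))) =
    u₁ * Real.log |Real.cos ξ₁ / Real.cos η₁|
    - ((1 - x) / 2) *
        Real.log ((Real.sin ξ₁ * (Real.sin η₁ + 1) - Real.sin η₁ - 1) /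
          (Real.sin ξ₁ * (Real.sin η₁ - 1) + Real.sin η₁ - 1))
    + v₁ * (η₁ - ξ₁) := by
  have hab : ξ₁ - α ≤ η₁ - α := by linarith
  -- basic sin bounds on the interval
  have hsin : ∀ τ ∈ Set.Icc ξ₁ η₁,
      1 + Real.sin τ > 0 ∧ 1 - Real.sin τ > 0 := by
    intro τ hτ
    have hc := hcos τ hτ
    have h2 : 0 < Real.cos τ ^ 2 := pow_two_pos_of_ne_zero hc
    have hp := Real.sin_sq_add_cos_sq τ
    constructor <;> nlinarith [sq_nonneg (1 + Real.sin τ), sq_nonneg (1 - Real.sin τ)]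
  set f : ℝ → ℝ := fun θ => r + (x - 1 + r * Real.cos θ) / Real.cos (θ + α) with hf
  set F : ℝ → ℝ := fun θ => v₁ * θ - u₁ * Real.log (Real.cos (θ + α))
      + ((x - 1) / 2) *
        (Real.log (1 + Real.sin (θ + α)) - Real.log (1 - Real.sin (θ + α))) with hF
  have hmem : ∀ θ ∈ Set.uIcc (ξ₁ - α) (η₁ - α), θ + α ∈ Set.Icc ξ₁ η₁ := by
    intro θ hθ
    rw [Set.uIcc_of_le hab] at hθ
    exact ⟨by linarith [hθ.1], by linarith [hθ.2]⟩
  have key : ∀ θ ∈ Set.uIcc (ξ₁ - α) (η₁ - α), HasDerivAt F (f θ) θ := by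
    intro θ hθ
    have hτ := hmem θ hθ
    have hc : Real.cos (θ + α) ≠ 0 := hcos _ hτ
    have hsp := (hsin _ hτ).1
    have hsm := (hsin _ hτ).2
    have hlin : HasDerivAt (fun θ : ℝ => θ + α) 1 θ := by
      simpa using (hasDerivAt_id θ).add_const α
    have hdc : HasDerivAt (fun θ => Real.cos (θ + α)) (-Real.sin (θ + α)) θ := by
      simpa [Function.comp_def] using (Real.hasDerivAt_cos (θ + α)).comp θ hlin
    have hds : HasDerivAt (fun θ => Real.sin (θ + α)) (Real.cos (θ + α)) θ := by
      simpa [Function.comp_def] using (Real.hasDerivAt_sin (θ + α)).comp θ hlin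
    have h1 : HasDerivAt (fun θ => Real.log (Real.cos (θ + α)))
        (-Real.sin (θ + α) / Real.cos (θ + α)) θ := hdc.log hc
    have h2 : HasDerivAt (fun θ => Real.log (1 + Real.sin (θ + α)))
        (Real.cos (θ + α) / (1 + Real.sin (θ + α))) θ := by
      have := ((hasDerivAt_const θ (1:ℝ)).add hds).log (by simp only [Pi.add_apply, Pi.sub_apply]; linarith)
      simpa using this
    have h3 : HasDerivAt (fun θ => Real.log (1 - Real.sin (θ + α)))
        (-Real.cos (θ + α) / (1 - Real.sin (θ + α))) θ := by
      have := ((hasDerivAt_const θ (1:ℝ)).sub hds).log (by simp only [Pi.add_apply, Pi.sub_apply]; linarith)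
      simpa using this
    have hd : HasDerivAt F
        (v₁ - u₁ * (-Real.sin (θ + α) / Real.cos (θ + α))
          + ((x - 1) / 2) * (Real.cos (θ + α) / (1 + Real.sin (θ + α))
            - -Real.cos (θ + α) / (1 - Real.sin (θ + α)))) θ := by
      have hv : HasDerivAt (fun θ : ℝ => v₁ * θ) v₁ θ := by
        simpa using (hasDerivAt_id θ).const_mul v₁
      exact (hv.sub (h1.const_mul u₁)).add ((h2.sub h3).const_mul ((x - 1) / 2))
    convert hd using 1
    have hcosθ : Real.cos θ =
        Real.cos (θ + α) * Real.cos α + Real.sin (θ + α) * Real.sin α := by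
      have := Real.cos_sub (θ + α) α
      simpa using this
    have hp := Real.sin_sq_add_cos_sq (θ + α)
    rw [hf]
    simp only
    rw [hcosθ, hu₁, hv₁]
    field_simp
    linear_combination (-2 * (x - 1)) * hp
  have hcont : ContinuousOn f (Set.uIcc (ξ₁ - α) (η₁ - α)) := by
    apply ContinuousOn.add continuousOn_const
    apply ContinuousOn.div
    · fun_prop
    · fun_prop
    · intro θ hθ
      exact hcos _ (hmem θ hθ)
  have hint : IntervalIntegrable f MeasureTheory.volume (ξ₁ - α) (η₁ - α) :=
    hcont.intervalIntegrable
  have hFTC := intervalIntegral.integral_eq_sub_of_hasDerivAt key hint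
  rw [show (∫ θ in (ξ₁ - α)..(η₁ - α),
        (r + (x - 1 + r * Real.cos θ) / Real.cos (θ + α))) = F (η₁ - α) - F (ξ₁ - α)
      from hFTC]
  have e1 : η₁ - α + α = η₁ := by ring
  have e2 : ξ₁ - α + α = ξ₁ := by ring
  rw [hF]
  simp only [e1, e2]
  -- now algebra with logs
  have hcξ : Real.cos ξ₁ ≠ 0 := hcos _ ⟨le_refl _, hξη⟩
  have hcη : Real.cos η₁ ≠ 0 := hcos _ ⟨hξη, le_refl _⟩
  obtain ⟨hξp, hξm⟩ := hsin ξ₁ ⟨le_refl _, hξη⟩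
  obtain ⟨hηp, hηm⟩ := hsin η₁ ⟨hξη, le_refl _⟩
  have habs : Real.log |Real.cos ξ₁ / Real.cos η₁|
      = Real.log (Real.cos ξ₁) - Real.log (Real.cos η₁) := by
    rw [Real.log_abs, Real.log_div hcξ hcη]
  have hratio : (Real.sin ξ₁ * (Real.sin η₁ + 1) - Real.sin η₁ - 1) /
        (Real.sin ξ₁ * (Real.sin η₁ - 1) + Real.sin η₁ - 1)
      = ((1 - Real.sin ξ₁) * (1 + Real.sin η₁)) /
        ((1 + Real.sin ξ₁) * (1 - Real.sin η₁)) := by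
    rw [div_eq_div_iff]
    · ring
    · intro h
      nlinarith
    · positivity
  have hlr : Real.log (((1 - Real.sin ξ₁) * (1 + Real.sin η₁)) /
        ((1 + Real.sin ξ₁) * (1 - Real.sin η₁)))
      = Real.log (1 - Real.sin ξ₁) + Real.log (1 + Real.sin η₁)
        - (Real.log (1 + Real.sin ξ₁) + Real.log (1 - Real.sin η₁)) := by
    rw [Real.log_div (by positivity) (by positivity),
      Real.log_mul (by positivity) (by positivity),
      Real.log_mul (by positivity) (by positivity)]
  rw [hratio, hlr, habs]
  ring
end

section
/- Let r > 1, s ≥ 0, 0 < α < π, 0 ≤ β ≤ π, and 0 < x < 1. Set κ = √(r² + s² - 2rs·cos α), ρ = arcsin(s·sin α/κ), u₂ = s·sin β - r·sin(α + β), v₂ = r + s + s·cos β - r·cos(α + β), ξ₂ = α + β + ρ + arccos((1-x)/κ), and η₂ = α + β + π - arccos(x/r). Assume κ > 0, r ≥ s·cos α, 1 - x ≤ κ, ξ₂ ≤ η₂, and cos τ ≠ 0 for all τ ∈ [ξ₂, η₂]. Then ∫_{ξ₂ - α - β}^{η₂ - α - β} ( r + s + (1 - x + s·cos(θ + α) -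 r·cos θ)/cos(θ + α + β) ) dθ = u₂·ln| cos ξ₂ / cos η₂ | + ((1-x)/2)·ln( (sin ξ₂·(sin η₂ + 1) - sin η₂ - 1)/(sin ξ₂·(sin η₂ - 1) + sin η₂ - 1) ) + v₂·(η₂ - ξ₂). -/
open Real intervalIntegral


private lemma aux9 (c st cβ sβ cab sab X R S : ℝ) (hc : c ≠ 0) :
    R + S + (1 - X + S * (c * cβ + st * sβ) - R * (c * cab + st * sab)) / c =
    (R + S + S * cβ - R * cab) * 1 -
      (S * sβ - R * sab) * (-st / c) +
      (1 - X) / 2 * (2 / c) := by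
  field_simp
  ring

set_option maxHeartbeats 2000000 in
theorem stmt_9 (r s α β x κ ρ u₂ v₂ ξ₂ η₂ : ℝ)
    (hr : 1 < r) (hs : 0 ≤ s) (hα0 : 0 < α) (hαπ : α < Real.pi)
    (hβ0 : 0 ≤ β) (hβπ : β ≤ Real.pi)
    (hx0 : 0 < x) (hx1 : x < 1)
    (hκ : κ = Real.sqrt (r ^ 2 + s ^ 2 - 2 * r * s * Real.cos α))
    (hρ : ρ = Real.arcsin (s * Real.sin α / κ))
    (hu₂ : u₂ = s * Real.sin β - r * Real.sin (α + β))
    (hv₂ : v₂ = r + s + s * Real.cos β - r * Real.cos (α + β))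
    (hξ₂ : ξ₂ = α + β + ρ + Real.arccos ((1 - x) / κ))
    (hη₂ : η₂ = α + β + Real.pi - Real.arccos (x / r))
    (hκpos : 0 < κ) (hrs : s * Real.cos α ≤ r) (hxκ : 1 - x ≤ κ)
    (hξη : ξ₂ ≤ η₂)
    (hcos : ∀ τ ∈ Set.Icc ξ₂ η₂, Real.cos τ ≠ 0) :
    (∫ θ in (ξ₂ - α - β)..(η₂ - α - β),
        (r + s + (1 - x + s * Real.cos (θ + α) - r * Real.cos θ) /
          Real.cos (θ + α + β))) =
    u₂ * Real.log |Real.cos ξ₂ / Real.cos η₂|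
    + ((1 - x) / 2) *
        Real.log ((Real.sin ξ₂ * (Real.sin η₂ + 1) - Real.sin η₂ - 1) /
          (Real.sin ξ₂ * (Real.sin η₂ - 1) + Real.sin η₂ - 1))
    + v₂ * (η₂ - ξ₂) := by
  have hξc : Real.cos ξ₂ ≠ 0 := hcos ξ₂ ⟨le_refl _, hξη⟩
  have hηc : Real.cos η₂ ≠ 0 := hcos η₂ ⟨hξη, le_refl _⟩
  have hab : ξ₂ - α - β ≤ η₂ - α - β := by linarith
  have hmem : ∀ θ ∈ Set.uIcc (ξ₂ - α - β) (η₂ - α - β), Real.cos (θ + α + β) ≠ 0 := by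
    intro θ hθ
    rw [Set.uIcc_of_le hab] at hθ
    exact hcos _ ⟨by linarith [hθ.1], by linarith [hθ.2]⟩
  set F : ℝ → ℝ := fun θ => v₂ * θ - u₂ * Real.log (Real.cos (θ + α + β))
      + ((1 - x) / 2) * Real.log ((1 + Real.sin (θ + α + β)) / (1 - Real.sin (θ + α + β)))
    with hF
  have key : ∀ θ ∈ Set.uIcc (ξ₂ - α - β) (η₂ - α - β),
      HasDerivAt F (r + s + (1 - x + s * Real.cos (θ + α) - r * Real.cos θ) /
          Real.cos (θ + α + β)) θ := by
    intro θ hθ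
    have hc : Real.cos (θ + α + β) ≠ 0 := hmem θ hθ
    have hs2 : Real.sin (θ + α + β) ^ 2 < 1 := by
      nlinarith [Real.sin_sq_add_cos_sq (θ + α + β), sq_pos_of_ne_zero hc]
    have hsu : Real.sin (θ + α + β) < 1 := by nlinarith
    have hsl : -1 < Real.sin (θ + α + β) := by nlinarith
    have h1m : (1 : ℝ) - Real.sin (θ + α + β) ≠ 0 := by linarith
    have h1p : (1 : ℝ) + Real.sin (θ + α + β) ≠ 0 := by linarith
    have hlin : HasDerivAt (fun θ : ℝ => θ + α + β) 1 θ := by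
      simpa using ((hasDerivAt_id θ).add_const α).add_const β
    have hcd : HasDerivAt (fun θ : ℝ => Real.cos (θ + α + β))
        (-Real.sin (θ + α + β)) θ := by
      simpa [Function.comp_def] using (Real.hasDerivAt_cos (θ + α + β)).comp θ hlin
    have hsd : HasDerivAt (fun θ : ℝ => Real.sin (θ + α + β))
        (Real.cos (θ + α + β)) θ := by
      simpa [Function.comp_def] using (Real.hasDerivAt_sin (θ + α + β)).comp θ hlin
    have hlog1 : HasDerivAt (fun θ : ℝ => Real.log (Real.cos (θ + α + β)))
        (-Real.sin (θ + α + β) / Real.cos (θ + α + β)) θ := hcd.log hc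
    have hnum : HasDerivAt (fun θ : ℝ => 1 + Real.sin (θ + α + β))
        (Real.cos (θ + α + β)) θ := hsd.const_add 1
    have hden : HasDerivAt (fun θ : ℝ => 1 - Real.sin (θ + α + β))
        (-Real.cos (θ + α + β)) θ := by
      simpa using hsd.const_sub 1
    have hdiv : HasDerivAt (fun θ : ℝ =>
        (1 + Real.sin (θ + α + β)) / (1 - Real.sin (θ + α + β)))
        ((Real.cos (θ + α + β) * (1 - Real.sin (θ + α + β)) -
          (1 + Real.sin (θ + α + β)) * (-Real.cos (θ + α + β))) /
          (1 - Real.sin (θ + α + β)) ^ 2) θ := hnum.div hden h1m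
    have hratio : (1 + Real.sin (θ + α + β)) / (1 - Real.sin (θ + α + β)) ≠ 0 :=
      div_ne_zero h1p h1m
    have hlog2 := (hdiv.log hratio)
    have hder : HasDerivAt F
        (v₂ * 1 - u₂ * (-Real.sin (θ + α + β) / Real.cos (θ + α + β))
          + ((1 - x) / 2) *
            (((Real.cos (θ + α + β) * (1 - Real.sin (θ + α + β)) -
              (1 + Real.sin (θ + α + β)) * (-Real.cos (θ + α + β))) /
              (1 - Real.sin (θ + α + β)) ^ 2) /
              ((1 + Real.sin (θ + α + β)) / (1 - Real.sin (θ + α + β))))) θ := by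
      exact (((hasDerivAt_id θ).const_mul v₂).sub (hlog1.const_mul u₂)).add
        (hlog2.const_mul ((1 - x) / 2))
    have hterm3 : ((Real.cos (θ + α + β) * (1 - Real.sin (θ + α + β)) -
              (1 + Real.sin (θ + α + β)) * (-Real.cos (θ + α + β))) /
              (1 - Real.sin (θ + α + β)) ^ 2) /
              ((1 + Real.sin (θ + α + β)) / (1 - Real.sin (θ + α + β))) =
        2 / Real.cos (θ + α + β) := by
      have pyth : Real.sin (θ + α + β) ^ 2 + Real.cos (θ + α + β) ^ 2 = 1 :=
        Real.sin_sq_add_cos_sq _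
      field_simp
      nlinarith [pyth]
    rw [hterm3] at hder
    convert hder using 1
    have e1 : Real.cos (θ + α) = Real.cos (θ + α + β) * Real.cos β +
        Real.sin (θ + α + β) * Real.sin β := by
      rw [← Real.cos_sub]
      ring_nf
    have e0 : Real.cos θ = Real.cos (θ + α + β) * Real.cos (α + β) +
        Real.sin (θ + α + β) * Real.sin (α + β) := by
      rw [← Real.cos_sub]
      ring_nf
    rw [hu₂, hv₂, e1, e0]
    exact aux9 (Real.cos (θ + α + β)) (Real.sin (θ + α + β)) (Real.cos β)
      (Real.sin β) (Real.cos (α + β)) (Real.sin (α + β)) x r s hc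
  have hint : IntervalIntegrable (fun θ =>
      r + s + (1 - x + s * Real.cos (θ + α) - r * Real.cos θ) /
        Real.cos (θ + α + β)) MeasureTheory.volume (ξ₂ - α - β) (η₂ - α - β) := by
    apply ContinuousOn.intervalIntegrable
    apply ContinuousOn.add continuousOn_const
    exact ContinuousOn.div
      (Continuous.continuousOn (by fun_prop))
      (Continuous.continuousOn (by fun_prop))
      hmem
  rw [intervalIntegral.integral_eq_sub_of_hasDerivAt key hint]
  have ha' : ξ₂ - α - β + α + β = ξ₂ := by ring
  have hb' : η₂ - α - β + α + β = η₂ := by ring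
  rw [hF]
  simp only [ha', hb']
  -- now pure log algebra
  have hsξ2 : Real.sin ξ₂ ^ 2 < 1 := by
    nlinarith [Real.sin_sq_add_cos_sq ξ₂, sq_pos_of_ne_zero hξc]
  have hsη2 : Real.sin η₂ ^ 2 < 1 := by
    nlinarith [Real.sin_sq_add_cos_sq η₂, sq_pos_of_ne_zero hηc]
  have hξu : Real.sin ξ₂ < 1 := by nlinarith
  have hξl : -1 < Real.sin ξ₂ := by nlinarith
  have hηu : Real.sin η₂ < 1 := by nlinarith
  have hηl : -1 < Real.sin η₂ := by nlinarith
  have hpξ : (0:ℝ) < (1 + Real.sin ξ₂) / (1 - Real.sin ξ₂) :=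
    div_pos (by linarith) (by linarith)
  have hpη : (0:ℝ) < (1 + Real.sin η₂) / (1 - Real.sin η₂) :=
    div_pos (by linarith) (by linarith)
  have hlogcos : Real.log |Real.cos ξ₂ / Real.cos η₂| =
      Real.log (Real.cos ξ₂) - Real.log (Real.cos η₂) := by
    rw [Real.log_abs, Real.log_div hξc hηc]
  have hlogsin : Real.log ((Real.sin ξ₂ * (Real.sin η₂ + 1) - Real.sin η₂ - 1) /
        (Real.sin ξ₂ * (Real.sin η₂ - 1) + Real.sin η₂ - 1)) =
      Real.log ((1 + Real.sin η₂) / (1 - Real.sin η₂)) -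
      Real.log ((1 + Real.sin ξ₂) / (1 - Real.sin ξ₂)) := by
    rw [← Real.log_div hpη.ne' hpξ.ne']
    congr 1
    have h1 : (1:ℝ) - Real.sin ξ₂ ≠ 0 := by linarith
    have h2 : (1:ℝ) + Real.sin ξ₂ ≠ 0 := by linarith
    have h3 : (1:ℝ) - Real.sin η₂ ≠ 0 := by linarith
    have h4 : Real.sin ξ₂ * (Real.sin η₂ - 1) + Real.sin η₂ - 1 ≠ 0 := by
      have : Real.sin ξ₂ * (Real.sin η₂ - 1) + Real.sin η₂ - 1 =
          (1 + Real.sin ξ₂) * (Real.sin η₂ - 1) := by ring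
      rw [this]
      exact mul_ne_zero h2 (by linarith)
    field_simp
    ring
  rw [hlogcos, hlogsin]
  ring
end

section
/- ∫₀¹ ∫₀^{2π} x·( -x·cos θ + √(1 - x²·sin² θ) ) dθ dx = 8/3. Consequently, the expected length of a straight-line escape path from a point uniformly distributed on the unit disk in a uniformly distributed direction, namely (1/(2π²))·∫₀^{2π} ∫₀¹ ∫₀^{2π} x·( -x·cos θ + √(1 - x²·sin² θ) ) dθ dx dψ = (1/π)·∫₀¹ ∫₀^{2π} x·( -x·cos θ + √(1 - x²·sin² θ) ) dθ dx, equals 8/(3π). -/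
open Real intervalIntegral MeasureTheory Set

noncomputable def fI (x θ : ℝ) : ℝ := x * Real.sqrt (1 - x ^ 2 * Real.sin θ ^ 2)

lemma contf : Continuous (Function.uncurry fI) := by
  unfold Function.uncurry fI; fun_prop

lemma contf1 (x : ℝ) : Continuous (fI x) := by unfold fI; fun_prop

lemma contf2 (θ : ℝ) : Continuous (fun x => fI x θ) := by unfold fI; fun_prop

lemma sym (x : ℝ) :
    (∫ θ in (0:ℝ)..(2*π), fI x θ) = 4 * ∫ θ in (0:ℝ)..(π/2), fI x θ := by
  have hint : ∀ a b : ℝ, IntervalIntegrable (fI x) volume a b :=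
    fun a b => (contf1 x).intervalIntegrable a b
  have h1 : (∫ θ in (π/2:ℝ)..π, fI x θ) = ∫ θ in (0:ℝ)..(π/2), fI x θ := by
    have h := intervalIntegral.integral_comp_sub_left (a := π/2) (b := π) (fI x) π
    rw [show π - π = (0:ℝ) by ring, show π - π/2 = π/2 by ring] at h
    rw [← h]
    apply intervalIntegral.integral_congr
    intro θ _
    simp [fI, Real.sin_pi_sub]
  have h2 : (∫ θ in (π:ℝ)..(2*π), fI x θ) = ∫ θ in (0:ℝ)..π, fI x θ := by
    have h := intervalIntegral.integral_comp_add_right (a := (0:ℝ)) (b := π) (fI x) π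
    rw [zero_add, show π + π = 2*π by ring] at h
    rw [← h]
    apply intervalIntegral.integral_congr
    intro θ _
    simp [fI, Real.sin_add_pi, neg_sq]
  have hsplit1 : (∫ θ in (0:ℝ)..π, fI x θ)
      = (∫ θ in (0:ℝ)..(π/2), fI x θ) + ∫ θ in (π/2:ℝ)..π, fI x θ :=
    (intervalIntegral.integral_add_adjacent_intervals (hint _ _) (hint _ _)).symm
  have hsplit2 : (∫ θ in (0:ℝ)..(2*π), fI x θ)
      = (∫ θ in (0:ℝ)..π, fI x θ) + ∫ θ in (π:ℝ)..(2*π), fI x θ :=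
    (intervalIntegral.integral_add_adjacent_intervals (hint _ _) (hint _ _)).symm
  rw [hsplit2, h2, hsplit1, h1]; ring

lemma innerx (θ : ℝ) (hθ : θ ∈ Set.Icc (0:ℝ) (π/2)) :
    (∫ x in (0:ℝ)..1, fI x θ) = Real.cos θ/3 + 1/(3*(1+Real.cos θ)) := by
  obtain ⟨h0, h1⟩ := hθ
  have hpi := Real.pi_pos
  have hs0 : 0 ≤ Real.sin θ := Real.sin_nonneg_of_nonneg_of_le_pi h0 (by linarith)
  have hs1 : Real.sin θ ≤ 1 := Real.sin_le_one θ
  have hc0 : 0 ≤ Real.cos θ := Real.cos_nonneg_of_mem_Icc ⟨by linarith, h1⟩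
  set s := Real.sin θ with hsdef
  set c := Real.cos θ with hcdef
  have hpy : s^2 + c^2 = 1 := Real.sin_sq_add_cos_sq θ
  by_cases hs : s = 0
  · have hc1 : c = 1 := by nlinarith
    have e : (∫ x in (0:ℝ)..1, fI x θ) = ∫ x in (0:ℝ)..1, x := by
      apply intervalIntegral.integral_congr
      intro x _
      simp [fI, ← hsdef, hs]
    rw [e, integral_id]
    norm_num [hc1]
  · have hspos : 0 < s := lt_of_le_of_ne hs0 (Ne.symm hs)
    have hclt : c < 1 := by nlinarith
    have key : ∀ x ∈ Set.uIcc (0:ℝ) 1,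
        HasDerivAt (fun x : ℝ => -(1 - x^2*s^2) ^ ((3:ℝ)/2) / (3*s^2)) (fI x θ) x := by
      intro x hx
      rw [Set.uIcc_of_le (by norm_num : (0:ℝ) ≤ 1)] at hx
      have hu0 : 0 ≤ 1 - x^2*s^2 := by nlinarith [hx.1, hx.2]
      have hu : HasDerivAt (fun x : ℝ => 1 - x^2*s^2) (-(2*x*s^2)) x := by
        have := ((hasDerivAt_pow 2 x).mul_const (s^2)).const_sub 1
        simpa using this
      have hr : HasDerivAt (fun y : ℝ => y ^ ((3:ℝ)/2))
          (((3:ℝ)/2) * (1 - x^2*s^2) ^ ((3:ℝ)/2 - 1)) (1 - x^2*s^2) :=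
        Real.hasDerivAt_rpow_const (Or.inr (by norm_num))
      have hcomp := ((hr.comp x hu).neg).div_const (3*s^2)
      refine hcomp.congr_deriv ?_; symm
      have h12 : ((3:ℝ)/2 - 1) = (1:ℝ)/2 := by norm_num
      rw [h12]
      have hsq : Real.sqrt (1 - x^2*s^2) = (1 - x^2*s^2) ^ ((1:ℝ)/2) := Real.sqrt_eq_rpow _
      show x * Real.sqrt (1 - x ^ 2 * s ^ 2) = _
      rw [hsq]
      field_simp
    rw [intervalIntegral.integral_eq_sub_of_hasDerivAt key ((contf2 θ).intervalIntegrable 0 1)]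
    have e1 : (1 - (1:ℝ)^2*s^2) = c^2 := by nlinarith
    have e0 : (1 - (0:ℝ)^2*s^2) = 1 := by ring
    rw [e1, e0, Real.one_rpow]
    have e2 : ((c^2 : ℝ)) ^ ((3:ℝ)/2) = c^3 := by
      rw [← Real.rpow_natCast c 2, ← Real.rpow_mul hc0, ← Real.rpow_natCast c 3]
      norm_num
    rw [e2]
    have hs2 : s^2 = 1 - c^2 := by linarith
    rw [hs2, show (1:ℝ) - c^2 = (1-c)*(1+c) by ring]
    have h1c : (1:ℝ) + c ≠ 0 := by positivity
    have h2c : (1:ℝ) - c ≠ 0 := by linarith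
    field_simp
    ring

lemma lem2 : (∫ θ in (0:ℝ)..(π/2), (Real.cos θ/3 + 1/(3*(1+Real.cos θ)))) = 2/3 := by
  have hpi := Real.pi_pos
  have hle : (0:ℝ) ≤ π/2 := by positivity
  have hcosne : ∀ θ ∈ Set.Icc (0:ℝ) (π/2), Real.cos (θ/2) ≠ 0 := by
    intro θ hθ
    have : θ/2 ∈ Set.Ioo (-(π/2)) (π/2) := ⟨by linarith [hθ.1], by linarith [hθ.2]⟩
    exact (Real.cos_pos_of_mem_Ioo this).ne'
  have h1cos : ∀ θ ∈ Set.Icc (0:ℝ) (π/2), (0:ℝ) < 1 + Real.cos θ := by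
    intro θ hθ
    have hc := Real.cos_nonneg_of_mem_Icc (⟨by linarith [hθ.1], hθ.2⟩ : θ ∈ Set.Icc (-(π/2)) (π/2))
    linarith
  have key : ∀ θ ∈ Set.uIcc (0:ℝ) (π/2),
      HasDerivAt (fun θ => Real.sin θ/3 + Real.tan (θ/2)/3)
        (Real.cos θ/3 + 1/(3*(1+Real.cos θ))) θ := by
    intro θ hθ
    rw [Set.uIcc_of_le hle] at hθ
    have hcos := hcosne θ hθ
    have hinner : HasDerivAt (fun x : ℝ => x/2) (1/2 : ℝ) θ := by
      simpa using (hasDerivAt_id θ).div_const 2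
    have ht : HasDerivAt (fun θ : ℝ => Real.tan (θ/2)) (1/Real.cos (θ/2)^2 * (1/2)) θ :=
      by have := (Real.hasDerivAt_tan hcos).comp θ hinner; exact this
    have hcomb := ((Real.hasDerivAt_sin θ).div_const 3).add (ht.div_const 3)
    refine hcomb.congr_deriv ?_; symm
    have h2 : Real.cos (θ/2)^2 = (1 + Real.cos θ)/2 := by
      rw [Real.cos_sq, show 2*(θ/2) = θ by ring]; ring
    have hne : (1:ℝ) + Real.cos θ ≠ 0 := (h1cos θ hθ).ne'
    rw [h2]
    field_simp
  have hci : IntervalIntegrable (fun θ => Real.cos θ/3 + 1/(3*(1+Real.cos θ))) volume 0 (π/2) := by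
    apply ContinuousOn.intervalIntegrable
    rw [Set.uIcc_of_le hle]
    apply ContinuousOn.add (Continuous.continuousOn (by fun_prop))
    apply ContinuousOn.div continuousOn_const (Continuous.continuousOn (by fun_prop))
    intro θ hθ
    have := h1cos θ hθ
    positivity
  rw [intervalIntegral.integral_eq_sub_of_hasDerivAt key hci]
  rw [show (π/2)/2 = π/4 by ring]
  norm_num [Real.tan_pi_div_four, Real.sin_pi_div_two]

lemma swapInt :
    (∫ x in (0:ℝ)..1, ∫ θ in (0:ℝ)..(π/2), fI x θ)
      = ∫ θ in (0:ℝ)..(π/2), ∫ x in (0:ℝ)..1, fI x θ := by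
  have hpi : (0:ℝ) ≤ π/2 := by positivity
  have h01 : (0:ℝ) ≤ 1 := by norm_num
  rw [intervalIntegral.integral_of_le h01, intervalIntegral.integral_of_le hpi]
  simp_rw [intervalIntegral.integral_of_le hpi, intervalIntegral.integral_of_le h01]
  apply MeasureTheory.integral_integral_swap
  rw [Measure.prod_restrict, ← Measure.volume_eq_prod]
  have hcpt : IsCompact (Set.Icc (0:ℝ) 1 ×ˢ Set.Icc (0:ℝ) (π/2)) :=
    isCompact_Icc.prod isCompact_Icc
  have hIcc : IntegrableOn (Function.uncurry fI) (Set.Icc (0:ℝ) 1 ×ˢ Set.Icc (0:ℝ) (π/2)) :=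
    contf.continuousOn.integrableOn_compact hcpt
  exact hIcc.mono_set (Set.prod_mono Set.Ioc_subset_Icc_self Set.Ioc_subset_Icc_self)

lemma step1 (x : ℝ) :
    (∫ θ in (0:ℝ)..(2*π),
        x * (-x * Real.cos θ + Real.sqrt (1 - x ^ 2 * Real.sin θ ^ 2)))
      = ∫ θ in (0:ℝ)..(2*π), fI x θ := by
  have hg : IntervalIntegrable (fun θ => x * (-x * Real.cos θ)) volume 0 (2*π) := by
    apply Continuous.intervalIntegrable; fun_prop
  have hf : IntervalIntegrable (fI x) volume 0 (2*π) := (contf1 x).intervalIntegrable 0 (2*π)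
  have e : ∀ θ : ℝ, x * (-x * Real.cos θ + Real.sqrt (1 - x ^ 2 * Real.sin θ ^ 2))
      = x * (-x * Real.cos θ) + fI x θ := by
    intro θ; unfold fI; ring
  simp_rw [e]
  rw [intervalIntegral.integral_add hg hf]
  have : (∫ θ in (0:ℝ)..(2*π), x * (-x * Real.cos θ)) = 0 := by
    simp_rw [show ∀ θ:ℝ, x * (-x * Real.cos θ) = (x * (-x)) * Real.cos θ from fun θ => by ring]
    rw [intervalIntegral.integral_const_mul, integral_cos]
    simp [Real.sin_two_pi]
  rw [this, zero_add]

lemma key1 :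
    (∫ x in (0:ℝ)..1, ∫ θ in (0:ℝ)..(2 * Real.pi),
        x * (-x * Real.cos θ + Real.sqrt (1 - x ^ 2 * Real.sin θ ^ 2))) = 8 / 3 := by
  have hpi : (0:ℝ) ≤ π/2 := by positivity
  calc (∫ x in (0:ℝ)..1, ∫ θ in (0:ℝ)..(2*π),
        x * (-x * Real.cos θ + Real.sqrt (1 - x ^ 2 * Real.sin θ ^ 2)))
      = ∫ x in (0:ℝ)..1, 4 * ∫ θ in (0:ℝ)..(π/2), fI x θ := by
        apply intervalIntegral.integral_congr
        intro x _
        show (∫ θ in (0:ℝ)..(2*π),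
            x * (-x * Real.cos θ + Real.sqrt (1 - x ^ 2 * Real.sin θ ^ 2)))
          = 4 * ∫ θ in (0:ℝ)..(π/2), fI x θ
        rw [step1 x, sym x]
    _ = 4 * ∫ x in (0:ℝ)..1, ∫ θ in (0:ℝ)..(π/2), fI x θ := by
        rw [intervalIntegral.integral_const_mul]
    _ = 4 * ∫ θ in (0:ℝ)..(π/2), ∫ x in (0:ℝ)..1, fI x θ := by rw [swapInt]
    _ = 4 * ∫ θ in (0:ℝ)..(π/2), (Real.cos θ/3 + 1/(3*(1+Real.cos θ))) := by
        congr 1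
        apply intervalIntegral.integral_congr
        intro θ hθ
        rw [Set.uIcc_of_le hpi] at hθ
        exact innerx θ hθ
    _ = 8/3 := by rw [lem2]; norm_num

theorem stmt_10 :
    (∫ x in (0:ℝ)..1, ∫ θ in (0:ℝ)..(2 * Real.pi),
        x * (-x * Real.cos θ + Real.sqrt (1 - x ^ 2 * Real.sin θ ^ 2))) = 8 / 3 ∧
    (1 / (2 * Real.pi ^ 2)) *
      (∫ _ψ in (0:ℝ)..(2 * Real.pi), ∫ x in (0:ℝ)..1, ∫ θ in (0:ℝ)..(2 * Real.pi),
        x * (-x * Real.cos θ + Real.sqrt (1 - x ^ 2 * Real.sin θ ^ 2))) =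
    (1 / Real.pi) *
      (∫ x in (0:ℝ)..1, ∫ θ in (0:ℝ)..(2 * Real.pi),
        x * (-x * Real.cos θ + Real.sqrt (1 - x ^ 2 * Real.sin θ ^ 2))) ∧
    (1 / Real.pi) *
      (∫ x in (0:ℝ)..1, ∫ θ in (0:ℝ)..(2 * Real.pi),
        x * (-x * Real.cos θ + Real.sqrt (1 - x ^ 2 * Real.sin θ ^ 2))) =
    8 / (3 * Real.pi) := by
  have hpi := Real.pi_ne_zero
  refine ⟨key1, ?_, ?_⟩
  · rw [intervalIntegral.integral_const, key1]
    rw [smul_eq_mul]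
    field_simp
    ring
  · rw [key1]
    field_simp
end

section
/- Let φ₀ ∈ [0, π/4) and let γ : [0,∞) → ℂ be continuously differentiable with γ(0) = 0 and γ'(t) = exp(i·φ(t)) for a continuous real function φ satisfying |φ(t)| ≤ φ₀ for all t. Then the function λ(s) = |γ(s)| is strictly increasing on [0,∞); in particular it is one-to-one. -/
/-!
Write `c = cos φ₀` and `s = sin φ₀`. By the mean value theorem applied to the real and imaginary
parts of `γ`, every chord `γ y - γ x` with `0 ≤ x ≤ y` has real part at least `c (y - x)` and
imaginary part at most `s (y - x)` in absolute value. For `0 ≤ a < b` write `γ b = γ a + w`; then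
`‖γ b‖² - ‖γ a‖² = 2 Re (γ a · conj w) + ‖w‖²`, where the cross term is at least
`2 a (b - a) (c² - s²) = 2 a (b - a) cos 2φ₀ ≥ 0` and `‖w‖² ≥ c² (b - a)² > 0`.
-/

open Real Complex ComplexConjugate

theorem Real.cos_le_cos_of_abs_le {x θ : ℝ} (hx : |x| ≤ θ) (hθ : θ ≤ π) : cos θ ≤ cos x := by
  rw [← cos_abs x]
  exact cos_le_cos_of_nonneg_of_le_pi (abs_nonneg x) hθ hx

theorem Real.abs_sin_le_sin_of_abs_le {x θ : ℝ} (hx : |x| ≤ θ) (hθ : θ ≤ π / 2) :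
    |sin x| ≤ sin θ := by
  rw [abs_sin_eq_sin_abs_of_abs_le_pi (by linarith [pi_pos])]
  exact sin_le_sin_of_le_of_le_pi_div_two (by linarith [abs_nonneg x, pi_pos]) hθ hx

section MeanValue

variable {f f' : ℝ → ℂ} {D : Set ℝ}

theorem Convex.mul_sub_le_re_sub_of_le_re_deriv (hD : Convex ℝ D)
    (hf : ∀ t ∈ D, HasDerivWithinAt f (f' t) D t) {C : ℝ} (hC : ∀ t ∈ D, C ≤ (f' t).re)
    ⦃x : ℝ⦄ (hx : x ∈ D) ⦃y : ℝ⦄ (hy : y ∈ D) (hxy : x ≤ y) : C * (y - x) ≤ (f y - f x).re := by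
  have hg : ∀ t ∈ D, HasDerivWithinAt (fun u => (f u).re - C * u) ((f' t).re - C) D t :=
    fun t ht => by
      have := (reCLM.hasFDerivAt.comp_hasDerivWithinAt t (hf t ht)).sub
        ((hasDerivWithinAt_id t D).const_mul C)
      simp only [reCLM_apply, mul_one] at this
      exact this
  have hmono : MonotoneOn (fun u => (f u).re - C * u) D :=
    monotoneOn_of_hasDerivWithinAt_nonneg hD (fun t ht => (hg t ht).continuousWithinAt)
      (fun t ht => (hg t (interior_subset ht)).mono interior_subset)
      (fun t ht => sub_nonneg.2 (hC t (interior_subset ht)))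
  have := hmono hx hy hxy
  simp only [sub_re]
  linarith

theorem Convex.abs_im_sub_le_of_abs_im_deriv_le (hD : Convex ℝ D)
    (hf : ∀ t ∈ D, HasDerivWithinAt f (f' t) D t) {C : ℝ} (hC : ∀ t ∈ D, |(f' t).im| ≤ C)
    ⦃x : ℝ⦄ (hx : x ∈ D) ⦃y : ℝ⦄ (hy : y ∈ D) : |(f y - f x).im| ≤ C * |y - x| := by
  simpa using hD.norm_image_sub_le_of_norm_hasDerivWithin_le (f := fun u => (f u).im)
    (fun t ht => imCLM.hasFDerivAt.comp_hasDerivWithinAt t (hf t ht)) hC hx hy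

end MeanValue

theorem Complex.norm_lt_norm_add_of_re_ge_of_abs_im_le {c s a h : ℝ} {z w : ℂ}
    (hc : 0 < c) (hsc : s ^ 2 ≤ c ^ 2) (ha : 0 ≤ a) (hh : 0 < h)
    (hz_re : c * a ≤ z.re) (hz_im : |z.im| ≤ s * a)
    (hw_re : c * h ≤ w.re) (hw_im : |w.im| ≤ s * h) : ‖z‖ < ‖z + w‖ := by
  have hre : c * a * (c * h) ≤ z.re * w.re :=
    mul_le_mul hz_re hw_re (by positivity) ((mul_nonneg hc.le ha).trans hz_re)
  have him : -(s * a * (s * h)) ≤ z.im * w.im := by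
    have := mul_le_mul hz_im hw_im (abs_nonneg _) ((abs_nonneg _).trans hz_im)
    rw [← abs_mul] at this
    linarith [neg_abs_le (z.im * w.im)]
  have hcross : 0 ≤ (z * conj w).re := by
    simp only [mul_re, conj_re, conj_im]
    nlinarith [mul_nonneg (mul_nonneg ha hh.le) (sub_nonneg.2 hsc)]
  have hw : 0 < normSq w := normSq_pos.2 fun hw0 => by
    simp only [hw0, zero_re] at hw_re
    nlinarith
  rw [← sq_lt_sq₀ (norm_nonneg _) (norm_nonneg _), Complex.sq_norm, Complex.sq_norm, normSq_add]
  linarith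

theorem stmt_13_general (φ₀ : ℝ) (hφ₀ : φ₀ ∈ Set.Ico 0 (Real.pi / 4))
    (γ : ℝ → ℂ) (φ : ℝ → ℝ)
    (hγ0 : γ 0 = 0)
    (hderiv : ∀ t ∈ Set.Ici (0:ℝ), HasDerivAt γ (Complex.exp (Complex.I * (φ t))) t)
    (hφbd : ∀ t ∈ Set.Ici (0:ℝ), |φ t| ≤ φ₀) :
    StrictMonoOn (fun s => ‖γ s‖) (Set.Ici 0) := by
  obtain ⟨hφ₀_nonneg, hφ₀_lt⟩ := hφ₀
  have hγ' := fun t ht => (hderiv t ht).hasDerivWithinAt (s := Set.Ici 0)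
  have hre := (convex_Ici 0).mul_sub_le_re_sub_of_le_re_deriv hγ' (C := Real.cos φ₀) fun t ht => by
    rw [mul_comm, exp_ofReal_mul_I_re]
    exact cos_le_cos_of_abs_le (hφbd t ht) (by linarith [pi_pos])
  have him := (convex_Ici 0).abs_im_sub_le_of_abs_im_deriv_le hγ' (C := Real.sin φ₀) fun t ht => by
    rw [mul_comm, exp_ofReal_mul_I_im]
    exact abs_sin_le_sin_of_abs_le (hφbd t ht) (by linarith [pi_pos])
  have hcos : 0 < Real.cos φ₀ := Real.cos_pos_of_mem_Ioo ⟨by linarith [pi_pos], by linarith⟩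
  have hsc : Real.sin φ₀ ^ 2 ≤ Real.cos φ₀ ^ 2 := by
    rw [← sub_nonneg, ← Real.cos_two_mul']
    exact Real.cos_nonneg_of_mem_Icc ⟨by linarith [pi_pos], by linarith⟩
  intro a (ha : 0 ≤ a) b (hb : 0 ≤ b) hab
  have h0 := (Set.self_mem_Ici : (0 : ℝ) ∈ Set.Ici 0)
  have := norm_lt_norm_add_of_re_ge_of_abs_im_le hcos hsc ha (sub_pos.2 hab)
    (by simpa [hγ0] using hre h0 ha ha) (by simpa [hγ0, abs_of_nonneg ha] using him h0 ha)
    (hre ha hb hab.le) (by simpa [abs_of_pos (sub_pos.2 hab)] using him ha hb)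
  rwa [add_sub_cancel] at this

theorem stmt_13 (φ₀ : ℝ) (hφ₀ : φ₀ ∈ Set.Ico 0 (Real.pi / 4))
    (γ : ℝ → ℂ) (φ : ℝ → ℝ)
    (hγ0 : γ 0 = 0)
    (hφcont : ContinuousOn φ (Set.Ici 0))
    (hderiv : ∀ t ∈ Set.Ici (0:ℝ), HasDerivAt γ (Complex.exp (Complex.I * (φ t))) t)
    (hφbd : ∀ t ∈ Set.Ici (0:ℝ), |φ t| ≤ φ₀) :
    StrictMonoOn (fun s => ‖γ s‖) (Set.Ici 0) :=
  stmt_13_general φ₀ hφ₀ γ φ hγ0 hderiv hφbd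
end
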